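/- arXiv:2305.14229 — 6 statements merged into one kernel-verified Lean document; each statement's English description precedes it below -/
import Mathlib

section
/- Let f : Z → X be a diffeomorphism that is compositional. Then for every z ∈ Z and every k ∈ [K], the mechanism Jf_{I_k(z)}(z) has rank exactly M, i.e., rank(Jf_{I_k}(z)) = M. -/
open Function Set

/-- A latent slot space `ℝ^M`. -/
abbrev SlotSp (M : ℕ) := Fin M → ℝ

/-- The latent space `Z = (ℝ^M)^K`. -/
abbrev LatSp (K M : ℕ) := Fin K → SlotSp M

/-- The observation space `X = ℝ^N`. -/
abbrev ObsSp (N : ℕ) := Fin N → ℝ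

/-- A diffeomorphism: a differentiable bijection with differentiable inverse. -/
def IsDiffeo {E F : Type*} [NormedAddCommGroup E] [NormedSpace ℝ E]
    [NormedAddCommGroup F] [NormedSpace ℝ F] (f : E → F) : Prop :=
  Differentiable ℝ f ∧
    ∃ g : F → E, Differentiable ℝ g ∧ Function.LeftInverse g f ∧ Function.RightInverse g f

/-- The partial derivative `∂f_n/∂z_k(z)` of the `n`-th component of `f` with respect to
the `k`-th latent slot at `z`, viewed as a (linear) map `ℝ^M → ℝ`. -/
noncomputable def slotDeriv {K M N : ℕ} (f : LatSp K M → ObsSp N) (z : LatSp K M)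
    (n : Fin N) (k : Fin K) : SlotSp M → ℝ :=
  fun v => fderiv ℝ f z (Pi.single k v) n

/-- `I_k(z)`: the set of pixels whose value depends on the `k`-th slot at `z`. -/
def Iset {K M N : ℕ} (f : LatSp K M → ObsSp N) (z : LatSp K M) (k : Fin K) : Set (Fin N) :=
  {n | slotDeriv f z n k ≠ 0}

/-- `f` is compositional: each pixel depends on at most one slot. -/
def Compositional {K M N : ℕ} (f : LatSp K M → ObsSp N) : Prop :=
  ∀ z : LatSp K M, ∀ k j : Fin K, k ≠ j → Iset f z k ∩ Iset f z j = ∅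

/-- `rank(Jf_S(z))`: the rank of the Jacobian of `f` at `z` restricted to the rows `S`. -/
noncomputable def jacRank {K M N : ℕ} (f : LatSp K M → ObsSp N) (z : LatSp K M)
    (S : Set (Fin N)) : ℕ :=
  Module.finrank ℝ
    (LinearMap.range ((LinearMap.funLeft ℝ ℝ ((↑) : S → Fin N)).comp
      (fderiv ℝ f z).toLinearMap))

/-- The sub-mechanisms `Jf_{S1}(z)` and `Jf_{S2}(z)` are independent. -/
def IndepSub {K M N : ℕ} (f : LatSp K M → ObsSp N) (z : LatSp K M) (S1 S2 : Set (Fin N)) : Prop :=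
  jacRank f z (S1 ∪ S2) = jacRank f z S1 + jacRank f z S2

/-- The sub-mechanisms `Jf_{S1}(z)` and `Jf_{S2}(z)` are dependent. -/
def DepSub {K M N : ℕ} (f : LatSp K M → ObsSp N) (z : LatSp K M) (S1 S2 : Set (Fin N)) : Prop :=
  jacRank f z (S1 ∪ S2) < jacRank f z S1 + jacRank f z S2

/-- `f` has irreducible mechanisms: no mechanism can be partitioned into two
independent sub-mechanisms. -/
def IrreducibleMech {K M N : ℕ} (f : LatSp K M → ObsSp N) : Prop :=
  ∀ (z : LatSp K M) (k : Fin K) (S1 S2 : Set (Fin N)),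
    S1.Nonempty → S2.Nonempty → S1 ∪ S2 = Iset f z k → S1 ∩ S2 = ∅ →
      DepSub f z S1 S2

/-- The `M × M` Jacobian block `∂h_j/∂z_i(z)` of a map `h : Z → Z`, giving the derivative
of the `j`-th output slot with respect to the `i`-th input slot at `z`. -/
noncomputable def slotBlock {K M : ℕ} (h : LatSp K M → LatSp K M) (z : LatSp K M)
    (j i : Fin K) : SlotSp M → SlotSp M :=
  fun v => fderiv ℝ h z (Pi.single i v) j

/-- `gHat` slot-identifies `z = f⁻¹(x)`: for every ground-truth slot `k` there are a
unique slot index `j` and a diffeomorphism `h` with `(gHat (f z))_j = h (z_k)` for all `z`. -/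
def SlotIdentifies {K M N : ℕ} (f : LatSp K M → ObsSp N) (gHat : ObsSp N → LatSp K M) : Prop :=
  ∀ k : Fin K, ∃! j : Fin K, ∃ h : SlotSp M → SlotSp M,
    IsDiffeo h ∧ ∀ z : LatSp K M, gHat (f z) j = h (z k)

/-- The Euclidean norm `‖∂f_n/∂z_k(z)‖` of the gradient of the `n`-th component of `f`
with respect to the `k`-th slot at `z`. -/
noncomputable def slotGradNorm {K M N : ℕ} (f : LatSp K M → ObsSp N) (z : LatSp K M)
    (n : Fin N) (k : Fin K) : ℝ :=
  Real.sqrt (∑ i : Fin M, (fderiv ℝ f z (Pi.single k (Pi.single i (1 : ℝ))) n) ^ 2)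

/-- The compositional contrast `C(f, z)`. -/
noncomputable def Ccomp {K M N : ℕ} (f : LatSp K M → ObsSp N) (z : LatSp K M) : ℝ :=
  ∑ n : Fin N, ∑ k : Fin K, ∑ j : Fin K,
    if k < j then slotGradNorm f z n k * slotGradNorm f z n j else 0

/-- **Lemma 3.** Each mechanism of a compositional diffeomorphism has rank exactly `M`. -/
theorem mechanism_rank {K M N : ℕ} (hK : 1 ≤ K) (hM : 1 ≤ M) (hN : 1 ≤ N)
    (f : LatSp K M → ObsSp N) (hf : IsDiffeo f) (hfc : Compositional f) :
    ∀ (z : LatSp K M) (k : Fin K), jacRank f z (Iset f z k) = M := by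
  intro z k
  obtain ⟨hdf, g, hdg, hgf, hfg⟩ := hf
  set D := fderiv ℝ f z with hD
  have hcomp : (fderiv ℝ g (f z)).comp D = ContinuousLinearMap.id ℝ (LatSp K M) := by
    have h1 : HasFDerivAt (g ∘ f) ((fderiv ℝ g (f z)).comp D) z :=
      (hdg (f z)).hasFDerivAt.comp z (hdf z).hasFDerivAt
    have h2 : HasFDerivAt (g ∘ f) (ContinuousLinearMap.id ℝ (LatSp K M)) z := by
      have hid : g ∘ f = id := funext hgf
      rw [hid]; exact hasFDerivAt_id z
    exact h1.unique h2
  have hinj : Function.Injective D := by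
    intro a b hab
    have ha := ContinuousLinearMap.ext_iff.mp hcomp a
    have hb := ContinuousLinearMap.ext_iff.mp hcomp b
    simp only [ContinuousLinearMap.comp_apply, ContinuousLinearMap.id_apply] at ha hb
    rw [← ha, ← hb, hab]
  set S := Iset f z k with hS
  set L : LatSp K M →ₗ[ℝ] (S → ℝ) :=
    (LinearMap.funLeft ℝ ℝ ((↑) : S → Fin N)).comp D.toLinearMap with hL
  set e : SlotSp M →ₗ[ℝ] LatSp K M := LinearMap.single ℝ (fun _ => SlotSp M) k with he
  have hzero : ∀ j : Fin K, j ≠ k → ∀ v : SlotSp M, ∀ n ∈ S, D (Pi.single j v) n = 0 := by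
    intro j hj v n hn
    have hdisj := hfc z k j (Ne.symm hj)
    have hnotin : n ∉ Iset f z j := by
      intro hn2
      exact absurd (Set.mem_inter hn hn2) (by rw [hdisj]; exact Set.notMem_empty n)
    have h0 : slotDeriv f z n j = 0 := not_not.mp hnotin
    exact congrFun h0 v
  have hLe : ∀ w : LatSp K M, L w = L (e (w k)) := by
    intro w
    funext nn
    obtain ⟨n, hn⟩ := nn
    show D w n = D (Pi.single k (w k)) n
    conv_lhs => rw [← Finset.univ_sum_single w]
    rw [map_sum, Finset.sum_apply]
    exact Finset.sum_eq_single k (fun j _ hj => hzero j hj (w j) n hn)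
      (fun h => absurd (Finset.mem_univ k) h)
  have hinjLe : Function.Injective (L.comp e) := by
    rw [← LinearMap.ker_eq_bot, LinearMap.ker_eq_bot']
    intro v hv
    have hDzero : D (Pi.single k v) = 0 := by
      funext n
      by_cases hn : n ∈ S
      · exact congrFun hv ⟨n, hn⟩
      · have h0 : slotDeriv f z n k = 0 := not_not.mp hn
        exact congrFun h0 v
    have hsingle : (Pi.single k v : LatSp K M) = 0 := hinj (by rw [hDzero, map_zero])
    have := congrFun hsingle k
    rwa [Pi.single_eq_same] at this
  have hrange : LinearMap.range L = LinearMap.range (L.comp e) := by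
    apply le_antisymm
    · rintro x ⟨w, rfl⟩
      exact ⟨w k, (hLe w).symm⟩
    · exact LinearMap.range_comp_le_range e L
  show Module.finrank ℝ (LinearMap.range L) = M
  rw [hrange, LinearMap.finrank_range_of_inj hinjLe]
  simp [Module.finrank_fintype_fun_eq_card]
end

section
/- Let f : Z → X be a diffeomorphism that is compositional and irreducible, and let ĝ : X → Z be a diffeomorphism whose inverse f̂ = ĝ^{-1} is compositional. Then for every z ∈ Z and every j ∈ [K] there exists exactly one i ∈ [K] such that Î_j(ẑ) ∩ I_i(z) ≠ ∅, where ẑ := ĝ(f(z)). -/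
open Function Set

section AuxLemmas

open Function Set LinearMap

variable {N' : ℕ} {E' E'' F' : Type*} [AddCommGroup E'] [Module ℝ E']
  [AddCommGroup E''] [Module ℝ E''] [AddCommGroup F'] [Module ℝ F']

/-- rank of the rows `S` of a linear map into `Fin N' → ℝ`. -/
noncomputable def rkS (T : E' →ₗ[ℝ] (Fin N' → ℝ)) (S : Set (Fin N')) : ℕ :=
  Module.finrank ℝ (LinearMap.range ((LinearMap.funLeft ℝ ℝ ((↑) : S → Fin N')).comp T))

lemma rkS_comp_surj (T : E' →ₗ[ℝ] (Fin N' → ℝ)) (V : E'' →ₗ[ℝ] E')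
    (hV : LinearMap.range V = ⊤) (S : Set (Fin N')) :
    rkS (T.comp V) S = rkS T S := by
  unfold rkS
  rw [← LinearMap.comp_assoc, LinearMap.range_comp_of_range_eq_top _ hV]

lemma rkS_mono (T : E' →ₗ[ℝ] (Fin N' → ℝ)) {S S' : Set (Fin N')} (h : S ⊆ S') :
    rkS T S ≤ rkS T S' := by
  unfold rkS
  have hco : ((↑) : S → Fin N') = ((↑) : S' → Fin N') ∘ Set.inclusion h := rfl
  rw [hco, LinearMap.funLeft_comp, LinearMap.comp_assoc, LinearMap.range_comp]
  exact Submodule.finrank_map_le _ _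

/-- A product-of-submodules linear equivalence. -/
def subProdEquiv {R M N' : Type*} [CommRing R] [AddCommGroup M] [Module R M]
    [AddCommGroup N'] [Module R N'] (p : Submodule R M) (q : Submodule R N') :
    (p.prod q) ≃ₗ[R] p × q where
  toFun x := (⟨x.1.1, (Submodule.mem_prod.mp x.2).1⟩, ⟨x.1.2, (Submodule.mem_prod.mp x.2).2⟩)
  invFun x := ⟨(x.1.1, x.2.1), Submodule.mem_prod.mpr ⟨x.1.2, x.2.2⟩⟩
  map_add' _ _ := rfl
  map_smul' _ _ := rfl
  left_inv _ := rfl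
  right_inv _ := rfl

lemma rkS_add (T : E' →ₗ[ℝ] (Fin N' → ℝ)) (S1 S2 : Set (Fin N')) (P : E' →ₗ[ℝ] E')
    (h1 : ∀ v, ∀ n ∈ S1, T v n = T (P v) n)
    (h2 : ∀ v, ∀ n ∈ S2, T (P v) n = 0) :
    rkS T (S1 ∪ S2) = rkS T S1 + rkS T S2 := by
  classical
  set T12 := (LinearMap.funLeft ℝ ℝ ((↑) : ↥(S1 ∪ S2) → Fin N')).comp T with hT12
  set T1 := (LinearMap.funLeft ℝ ℝ ((↑) : S1 → Fin N')).comp T with hT1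
  set T2 := (LinearMap.funLeft ℝ ℝ ((↑) : S2 → Fin N')).comp T with hT2
  set ι1 : S1 → ↥(S1 ∪ S2) := Set.inclusion Set.subset_union_left with hι1
  set ι2 : S2 → ↥(S1 ∪ S2) := Set.inclusion Set.subset_union_right with hι2
  set J : (↥(S1 ∪ S2) → ℝ) →ₗ[ℝ] (S1 → ℝ) × (S2 → ℝ) :=
    (LinearMap.funLeft ℝ ℝ ι1).prod (LinearMap.funLeft ℝ ℝ ι2) with hJ
  have hJinj : Function.Injective J := by
    intro g g' hgg
    funext x
    rcases x.2 with hx | hx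
    · exact congrFun (congrArg Prod.fst hgg) ⟨x.1, hx⟩
    · exact congrFun (congrArg Prod.snd hgg) ⟨x.1, hx⟩
  have hcomp : J.comp T12 = T1.prod T2 := rfl
  have hker : LinearMap.ker T1 ⊔ LinearMap.ker T2 = ⊤ := by
    rw [eq_top_iff]
    intro v _
    refine Submodule.mem_sup.2 ⟨v - P v, ?_, P v, ?_, by abel⟩
    · rw [LinearMap.mem_ker]
      funext n
      show T (v - P v) ↑n = 0
      rw [map_sub, Pi.sub_apply, h1 v n n.2, sub_eq_zero]
    · rw [LinearMap.mem_ker]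
      funext n
      exact h2 v n n.2
  have hrange : LinearMap.range (T1.prod T2)
      = (LinearMap.range T1).prod (LinearMap.range T2) := LinearMap.range_prod_eq hker
  have e1 : rkS T (S1 ∪ S2) = Module.finrank ℝ (LinearMap.range (T1.prod T2)) := by
    rw [← hcomp, LinearMap.range_comp]
    exact (Submodule.equivMapOfInjective J hJinj _).finrank_eq
  rw [e1, hrange, (subProdEquiv _ _).finrank_eq, Module.finrank_prod]
  rfl

lemma rkS_le_of_factor [Module.Finite ℝ F']
    (T : E' →ₗ[ℝ] (Fin N' → ℝ)) (S : Set (Fin N')) (ι : F' →ₗ[ℝ] E') (ρ : E' →ₗ[ℝ] F')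
    (h : ∀ v, ∀ n ∈ S, T v n = T (ι (ρ v)) n) :
    rkS T S ≤ Module.finrank ℝ F' := by
  have hfac : (LinearMap.funLeft ℝ ℝ ((↑) : S → Fin N')).comp T
      = (((LinearMap.funLeft ℝ ℝ ((↑) : S → Fin N')).comp T).comp ι).comp ρ := by
    refine LinearMap.ext fun v => ?_
    funext n
    exact h v n n.2
  unfold rkS
  rw [hfac]
  refine le_trans (Submodule.finrank_mono (LinearMap.range_comp_le_range _ _)) ?_
  exact LinearMap.finrank_range_le _

lemma rkS_ge_of_inj [Module.Finite ℝ F']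
    (T : E' →ₗ[ℝ] (Fin N' → ℝ)) (S : Set (Fin N')) (ι : F' →ₗ[ℝ] E')
    (hinj : Function.Injective (((LinearMap.funLeft ℝ ℝ ((↑) : S → Fin N')).comp T).comp ι)) :
    Module.finrank ℝ F' ≤ rkS T S := by
  rw [← LinearMap.finrank_range_of_inj hinj]
  exact Submodule.finrank_mono (LinearMap.range_comp_le_range _ _)

lemma fderiv_comp_leftInv {E F : Type*} [NormedAddCommGroup E] [NormedSpace ℝ E]
    [NormedAddCommGroup F] [NormedSpace ℝ F]
    {p : F → E} {q : E → F} (hp : Differentiable ℝ p) (hq : Differentiable ℝ q)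
    (h : ∀ y, p (q y) = y) (x : E) :
    (fderiv ℝ p (q x)).comp (fderiv ℝ q x) = ContinuousLinearMap.id ℝ E := by
  have hc : fderiv ℝ (p ∘ q) x = (fderiv ℝ p (q x)).comp (fderiv ℝ q x) :=
    fderiv_comp x (hp _) (hq _)
  rw [show p ∘ q = id from funext h, fderiv_id] at hc
  exact hc.symm

variable {K M N : ℕ}

lemma sum_single_eq (v : LatSp K M) : ∑ k, Pi.single k (v k) = v := by
  funext i
  rw [Finset.sum_apply]
  exact Fintype.sum_pi_single i v

lemma row_single_zero (g : LatSp K M → ObsSp N) (w : LatSp K M)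
    {n : Fin N} {j : Fin K} (hn : n ∉ Iset g w j) (u : SlotSp M) :
    fderiv ℝ g w (Pi.single j u) n = 0 := by
  have h0 : slotDeriv g w n j = 0 := by
    by_contra h
    exact hn h
  exact congrFun h0 u

lemma row_dep_single (g : LatSp K M → ObsSp N) (hgc : Compositional g) (w : LatSp K M)
    {n : Fin N} {j : Fin K} (hn : n ∈ Iset g w j) (v : LatSp K M) :
    fderiv ℝ g w v n = fderiv ℝ g w (Pi.single j (v j)) n := by
  conv_lhs => rw [← sum_single_eq v]
  rw [map_sum, Finset.sum_apply, Finset.sum_eq_single j]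
  · intro k _ hkj
    have hnk : n ∉ Iset g w k := fun hk =>
      (Set.eq_empty_iff_forall_notMem.mp (hgc w k j hkj) n) ⟨hk, hn⟩
    exact row_single_zero g w hnk (v k)
  · intro h
    exact absurd (Finset.mem_univ j) h

end AuxLemmas
/-- **Proposition 2.** Each inferred latent slot generates the same pixels as exactly
one ground-truth slot: for every `z` and `j` there is exactly one `i` with
`Î_j(ẑ) ∩ I_i(z) ≠ ∅`, where `ẑ = gHat (f z)`. -/
theorem one_intersecting_object_indices {K M N : ℕ} (hK : 1 ≤ K) (hM : 1 ≤ M) (hN : 1 ≤ N)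
    (f : LatSp K M → ObsSp N) (hf : IsDiffeo f)
    (hfc : Compositional f) (hfi : IrreducibleMech f)
    (gHat : ObsSp N → LatSp K M) (fHat : LatSp K M → ObsSp N)
    (hgdiff : Differentiable ℝ gHat) (hfhdiff : Differentiable ℝ fHat)
    (hleft : Function.LeftInverse fHat gHat) (hright : Function.RightInverse fHat gHat)
    (hfhc : Compositional fHat) :
    ∀ (z : LatSp K M) (j : Fin K), ∃! i : Fin K,
      (Iset fHat (gHat (f z)) j ∩ Iset f z i).Nonempty := by
  intro z j
  classical
  obtain ⟨hfd, finv, hfinvd, hfl, hfr⟩ := hf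
  set zh : LatSp K M := gHat (f z) with hzh
  set A : LatSp K M →L[ℝ] ObsSp N := fderiv ℝ f z with hA
  set B : LatSp K M →L[ℝ] ObsSp N := fderiv ℝ fHat zh with hB
  set V : LatSp K M →L[ℝ] LatSp K M := fderiv ℝ (gHat ∘ f) z with hV
  -- chain rule: A = B ∘ V
  have hcompfun : fHat ∘ (gHat ∘ f) = f := funext fun w => hleft (f w)
  have hABV : A = B.comp V := by
    have h := fderiv_comp (𝕜 := ℝ) z (hfhdiff ((gHat ∘ f) z)) ((hgdiff.comp hfd) z)
    rw [hcompfun] at h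
    exact h
  -- V is surjective
  have hqdiff : Differentiable ℝ (finv ∘ fHat) := hfinvd.comp hfhdiff
  have hVW : (fderiv ℝ (gHat ∘ f) ((finv ∘ fHat) zh)).comp (fderiv ℝ (finv ∘ fHat) zh)
      = ContinuousLinearMap.id ℝ (LatSp K M) := by
    refine fderiv_comp_leftInv (hgdiff.comp hfd) hqdiff (fun y => ?_) zh
    show gHat (f (finv (fHat y))) = y
    rw [hfr (fHat y), hright y]
  have hpt : (finv ∘ fHat) zh = z := by
    show finv (fHat (gHat (f z))) = z
    rw [hleft (f z)]
    exact hfl z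
  rw [hpt] at hVW
  have hVsurj : LinearMap.range (V.toLinearMap) = ⊤ := by
    rw [LinearMap.range_eq_top]
    intro u
    refine ⟨fderiv ℝ (finv ∘ fHat) zh u, ?_⟩
    have h := congrArg (fun (L : LatSp K M →L[ℝ] LatSp K M) => L u) hVW
    simpa using h
  -- A is injective
  have hliA : ∀ v, (fderiv ℝ finv (f z)) (A v) = v := by
    intro v
    have h := congrArg (fun (L : LatSp K M →L[ℝ] LatSp K M) => L v)
      (fderiv_comp_leftInv hfinvd hfd hfl z)
    simpa using h
  have hAinj : Function.Injective A := fun a b hab => by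
    rw [← hliA a, ← hliA b, hab]
  -- A is surjective
  have hAsurj : ∀ u : ObsSp N, ∃ w, A w = u := by
    have h := fderiv_comp_leftInv hfd hfinvd hfr (f z)
    rw [show finv (f z) = z from hfl z] at h
    intro u
    refine ⟨fderiv ℝ finv (f z) u, ?_⟩
    have h2 := congrArg (fun (L : ObsSp N →L[ℝ] ObsSp N) => L u) h
    simpa using h2
  -- B is injective
  have hliB : ∀ v, (fderiv ℝ gHat (fHat zh)) (B v) = v := by
    intro v
    have h := congrArg (fun (L : LatSp K M →L[ℝ] LatSp K M) => L v)
      (fderiv_comp_leftInv hgdiff hfhdiff hright zh)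
    simpa using h
  have hBinj : Function.Injective B := fun a b hab => by
    rw [← hliB a, ← hliB b, hab]
  -- rank transfer
  have hrank_eq : ∀ S : Set (Fin N), jacRank f z S = jacRank fHat zh S := by
    intro S
    show rkS A.toLinearMap S = rkS B.toLinearMap S
    rw [hABV, ContinuousLinearMap.toLinearMap_comp]
    exact rkS_comp_surj _ _ hVsurj S
  -- slot projections
  set Pj : ∀ k : Fin K, LatSp K M →ₗ[ℝ] LatSp K M :=
    fun k => (LinearMap.single ℝ (fun _ : Fin K => SlotSp M) k).comp
      (LinearMap.proj k) with hPj
  have hPj_apply : ∀ k v, Pj k v = Pi.single k (v k) := fun _ _ => rfl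
  -- containment step
  have hsubset : ∀ i : Fin K, (Iset fHat zh j ∩ Iset f z i).Nonempty →
      Iset f z i ⊆ Iset fHat zh j := by
    intro i hne
    obtain ⟨n0, hn0⟩ := hne
    by_contra hns
    rw [Set.not_subset] at hns
    obtain ⟨n1, hn1i, hn1j⟩ := hns
    set S1 : Set (Fin N) := Iset f z i ∩ Iset fHat zh j with hS1
    set S2 : Set (Fin N) := Iset f z i \ Iset fHat zh j with hS2
    have hdep : DepSub f z S1 S2 := by
      refine hfi z i S1 S2 ⟨n0, hn0.2, hn0.1⟩ ⟨n1, hn1i, hn1j⟩ (by rw [hS1, hS2]; exact Set.inter_union_diff _ _) ?_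
      rw [Set.eq_empty_iff_forall_notMem]
      rintro n ⟨⟨-, hnj⟩, -, hnj'⟩
      exact hnj' hnj
    have heq : jacRank f z (S1 ∪ S2) = jacRank f z S1 + jacRank f z S2 := by
      rw [hrank_eq, hrank_eq, hrank_eq]
      refine rkS_add B.toLinearMap S1 S2 (Pj j) ?_ ?_
      · intro v n hn
        exact row_dep_single fHat hfhc zh hn.2 v
      · intro v n hn
        exact row_single_zero fHat zh hn.2 (v j)
    exact absurd heq (ne_of_lt hdep)
  -- upper bound
  have hupper : jacRank f z (Iset fHat zh j) ≤ M := by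
    rw [hrank_eq]
    have h := rkS_le_of_factor (F' := SlotSp M) B.toLinearMap (Iset fHat zh j)
      (LinearMap.single ℝ (fun _ : Fin K => SlotSp M) j) (LinearMap.proj j)
      (fun v n hn => row_dep_single fHat hfhc zh hn v)
    have h' : rkS B.toLinearMap (Iset fHat zh j) ≤ M := by simpa [Module.finrank_fin_fun] using h
    exact h'
  -- lower bound
  have hlower : ∀ i : Fin K, M ≤ jacRank f z (Iset f z i) := by
    intro i
    have hinj : Function.Injective
        ((((LinearMap.funLeft ℝ ℝ ((↑) : (Iset f z i) → Fin N)).comp A.toLinearMap)).comp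
          (LinearMap.single ℝ (fun _ : Fin K => SlotSp M) i)) := by
      intro u u' huu
      have hfull : A (Pi.single i u) = A (Pi.single i u') := by
        funext n
        by_cases hn : n ∈ Iset f z i
        · exact congrFun huu ⟨n, hn⟩
        · rw [row_single_zero f z hn u, row_single_zero f z hn u']
      have h := hAinj hfull
      have h2 := congrFun h i
      simpa [Pi.single_eq_same] using h2
    have h := rkS_ge_of_inj A.toLinearMap (Iset f z i)
      (LinearMap.single ℝ (fun _ : Fin K => SlotSp M) i) hinj
    have h' : M ≤ rkS A.toLinearMap (Iset f z i) := by simpa [Module.finrank_fin_fun] using h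
    exact h'
  -- additivity for f across two distinct slots
  have hadd : ∀ i1 i2 : Fin K, i1 ≠ i2 →
      jacRank f z (Iset f z i1 ∪ Iset f z i2)
        = jacRank f z (Iset f z i1) + jacRank f z (Iset f z i2) := by
    intro i1 i2 hne
    refine rkS_add A.toLinearMap _ _ (Pj i1) ?_ ?_
    · intro v n hn
      exact row_dep_single f hfc z hn v
    · intro v n hn
      have hni1 : n ∉ Iset f z i1 := fun h =>
        (Set.eq_empty_iff_forall_notMem.mp (hfc z i1 i2 hne) n) ⟨h, hn⟩
      exact row_single_zero f z hni1 (v i1)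
  -- existence
  have hjne : ∃ n, n ∈ Iset fHat zh j := by
    set v0 : LatSp K M := Pi.single j (Pi.single (⟨0, hM⟩ : Fin M) (1 : ℝ)) with hv0def
    have hv0 : v0 ≠ 0 := by
      intro h
      have h2 := congrFun (congrFun h j) ⟨0, hM⟩
      rw [hv0def] at h2
      simp [Pi.single_eq_same] at h2
    have hBv0 : B v0 ≠ 0 := by
      intro h0
      exact hv0 (hBinj (by rw [h0, map_zero]))
    have hex : ∃ n, B v0 n ≠ 0 := by
      by_contra hno
      push_neg at hno
      exact hBv0 (funext hno)
    obtain ⟨n0, hn0⟩ := hex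
    refine ⟨n0, fun hzero => hn0 ?_⟩
    exact congrFun hzero (Pi.single (⟨0, hM⟩ : Fin M) (1 : ℝ))
  obtain ⟨n0, hn0j⟩ := hjne
  have hexi : ∃ i, n0 ∈ Iset f z i := by
    by_contra hno
    push_neg at hno
    have hrow : ∀ v, A v n0 = 0 := by
      intro v
      conv_lhs => rw [← sum_single_eq v]
      rw [map_sum, Finset.sum_apply]
      exact Finset.sum_eq_zero fun k _ => row_single_zero f z (hno k) (v k)
    obtain ⟨w, hw⟩ := hAsurj (Pi.single n0 (1 : ℝ))
    have h := hrow w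
    rw [hw, Pi.single_eq_same] at h
    exact one_ne_zero h
  obtain ⟨i0, hi0⟩ := hexi
  refine ⟨i0, ⟨n0, hn0j, hi0⟩, ?_⟩
  intro i' hi'
  by_contra hne
  have hs1 : Iset f z i' ⊆ Iset fHat zh j := hsubset i' hi'
  have hs2 : Iset f z i0 ⊆ Iset fHat zh j := hsubset i0 ⟨n0, hn0j, hi0⟩
  have hMM : M + M ≤ M := by
    calc M + M ≤ jacRank f z (Iset f z i') + jacRank f z (Iset f z i0) :=
          add_le_add (hlower i') (hlower i0)
      _ = jacRank f z (Iset f z i' ∪ Iset f z i0) := (hadd i' i0 hne).symm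
      _ ≤ jacRank f z (Iset fHat zh j) :=
          rkS_mono A.toLinearMap (Set.union_subset hs1 hs2)
      _ ≤ M := hupper
  omega
end

section
/- Let f : Z → X be a diffeomorphism that is compositional and irreducible, and let ĝ : X → Z be a diffeomorphism whose inverse f̂ = ĝ^{-1} is compositional. Then for every z ∈ Z and every i ∈ [K] there exists exactly one j ∈ [K] such that Î_j(ẑ) ∩ I_i(z) ≠ ∅, where ẑ := ĝ(f(z)). -/
open Function Set

lemma apply_eq_sum_slotDeriv {K M N : ℕ} (F : LatSp K M → ObsSp N) (z v : LatSp K M) (n : Fin N) :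
    (fderiv ℝ F z) v n = ∑ j : Fin K, slotDeriv F z n j (v j) := by
  conv_lhs => rw [← Finset.univ_sum_single v]
  rw [map_sum]
  simp [slotDeriv]

lemma slotDeriv_zero_apply {K M N : ℕ} (F : LatSp K M → ObsSp N) (z : LatSp K M)
    (n : Fin N) (k : Fin K) : slotDeriv F z n k 0 = 0 := by
  simp [slotDeriv]

lemma rank_split {K M N : ℕ} (AL : LatSp K M →ₗ[ℝ] ObsSp N)
    (P Q : LatSp K M →ₗ[ℝ] LatSp K M) (hPQ : ∀ v, P v + Q v = v)
    (S1 S2 : Set (Fin N))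
    (h1 : ∀ v, ∀ n ∈ S1, AL (Q v) n = 0)
    (h2 : ∀ v, ∀ n ∈ S2, AL (P v) n = 0) :
    Module.finrank ℝ (LinearMap.range ((LinearMap.funLeft ℝ ℝ ((↑) : S1 → Fin N)).comp AL))
    + Module.finrank ℝ (LinearMap.range ((LinearMap.funLeft ℝ ℝ ((↑) : S2 → Fin N)).comp AL))
    ≤ Module.finrank ℝ (LinearMap.range ((LinearMap.funLeft ℝ ℝ ((↑) : ↥(S1 ∪ S2) → Fin N)).comp AL)) := by
  classical
  set B1 := (LinearMap.funLeft ℝ ℝ ((↑) : S1 → Fin N)).comp AL with hB1def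
  set B2 := (LinearMap.funLeft ℝ ℝ ((↑) : S2 → Fin N)).comp AL with hB2def
  set Φ := (LinearMap.funLeft ℝ ℝ ((↑) : ↥(S1 ∪ S2) → Fin N)).comp AL with hΦdef
  set W1 := LinearMap.range (Φ.comp P) with hW1def
  set W2 := LinearMap.range (Φ.comp Q) with hW2def
  have key1 : ∀ v n, n ∈ S1 → AL (P v) n = AL v n := by
    intro v n hn
    have hv : AL v = AL (P v) + AL (Q v) := by rw [← map_add, hPQ]
    rw [hv]; simp [h1 v n hn]
  have key2 : ∀ v n, n ∈ S2 → AL (Q v) n = AL v n := by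
    intro v n hn
    have hv : AL v = AL (P v) + AL (Q v) := by rw [← map_add, hPQ]
    rw [hv]; simp [h2 v n hn]
  have hinf : W1 ⊓ W2 = ⊥ := by
    rw [eq_bot_iff]
    rintro x ⟨⟨u, hu⟩, ⟨w, hw⟩⟩
    have hx : x = 0 := by
      funext s
      rcases s.2 with hn | hn
      · rw [← hw]
        simpa [Φ, LinearMap.funLeft] using h1 w s.1 hn
      · rw [← hu]
        simpa [Φ, LinearMap.funLeft] using h2 u s.1 hn
    simp [hx]
  have hrank1 : Module.finrank ℝ (LinearMap.range B1) ≤ Module.finrank ℝ W1 := by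
    let ι1 : S1 → ↥(S1 ∪ S2) := fun s => ⟨s.1, Or.inl s.2⟩
    let r1 : (↥(S1 ∪ S2) → ℝ) →ₗ[ℝ] (S1 → ℝ) := LinearMap.funLeft ℝ ℝ ι1
    have hr1 : r1.comp Φ = B1 := by
      apply LinearMap.ext; intro v; rfl
    have hmap : Submodule.map r1 W1 = LinearMap.range B1 := by
      rw [hW1def, ← LinearMap.range_comp, ← LinearMap.comp_assoc, hr1]
      have hBP : B1.comp P = B1 := by
        apply LinearMap.ext; intro v; funext s
        exact key1 v s.1 s.2
      rw [hBP]
    calc Module.finrank ℝ (LinearMap.range B1)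
        = Module.finrank ℝ (Submodule.map r1 W1) := by rw [hmap]
      _ ≤ Module.finrank ℝ W1 := Submodule.finrank_map_le r1 W1
  have hrank2 : Module.finrank ℝ (LinearMap.range B2) ≤ Module.finrank ℝ W2 := by
    let ι2 : S2 → ↥(S1 ∪ S2) := fun s => ⟨s.1, Or.inr s.2⟩
    let r2 : (↥(S1 ∪ S2) → ℝ) →ₗ[ℝ] (S2 → ℝ) := LinearMap.funLeft ℝ ℝ ι2
    have hr2 : r2.comp Φ = B2 := by
      apply LinearMap.ext; intro v; rfl
    have hmap : Submodule.map r2 W2 = LinearMap.range B2 := by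
      rw [hW2def, ← LinearMap.range_comp, ← LinearMap.comp_assoc, hr2]
      have hBQ : B2.comp Q = B2 := by
        apply LinearMap.ext; intro v; funext s
        exact key2 v s.1 s.2
      rw [hBQ]
    calc Module.finrank ℝ (LinearMap.range B2)
        = Module.finrank ℝ (Submodule.map r2 W2) := by rw [hmap]
      _ ≤ Module.finrank ℝ W2 := Submodule.finrank_map_le r2 W2
  have hsum := Submodule.finrank_sup_add_finrank_inf_eq W1 W2
  rw [hinf] at hsum
  simp only [finrank_bot, add_zero] at hsum
  have hle : W1 ⊔ W2 ≤ LinearMap.range Φ :=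
    sup_le (LinearMap.range_comp_le_range _ _) (LinearMap.range_comp_le_range _ _)
  calc Module.finrank ℝ (LinearMap.range B1) + Module.finrank ℝ (LinearMap.range B2)
      ≤ Module.finrank ℝ W1 + Module.finrank ℝ W2 := Nat.add_le_add hrank1 hrank2
    _ = Module.finrank ℝ ↥(W1 ⊔ W2) := hsum.symm
    _ ≤ Module.finrank ℝ (LinearMap.range Φ) := Submodule.finrank_mono hle

/-- **Corollary 1.** Each ground-truth latent slot generates the same pixels as exactly
one inferred slot: for every `z` and `i` there is exactly one `j` with
`Î_j(ẑ) ∩ I_i(z) ≠ ∅`, where `ẑ = gHat (f z)`. -/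
theorem rev_one_intersecting_object_indices {K M N : ℕ} (hK : 1 ≤ K) (hM : 1 ≤ M) (hN : 1 ≤ N)
    (f : LatSp K M → ObsSp N) (hf : IsDiffeo f)
    (hfc : Compositional f) (hfi : IrreducibleMech f)
    (gHat : ObsSp N → LatSp K M) (fHat : LatSp K M → ObsSp N)
    (hgdiff : Differentiable ℝ gHat) (hfhdiff : Differentiable ℝ fHat)
    (hleft : Function.LeftInverse fHat gHat) (hright : Function.RightInverse fHat gHat)
    (hfhc : Compositional fHat) :
    ∀ (z : LatSp K M) (i : Fin K), ∃! j : Fin K,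
      (Iset fHat (gHat (f z)) j ∩ Iset f z i).Nonempty := by
  classical
  intro z i
  obtain ⟨hfdiff, fInv, hfInvDiff, hfInvL, hfInvR⟩ := hf
  set hmap : LatSp K M → LatSp K M := fun w => gHat (f w) with hhm
  set zh : LatSp K M := hmap z with hzh
  have hhdiff : Differentiable ℝ hmap := hgdiff.comp hfdiff
  -- chain rule: fderiv f z = A ∘ T
  have hchain : fderiv ℝ f z = (fderiv ℝ fHat zh).comp (fderiv ℝ hmap z) := by
    have h2 : fderiv ℝ (fHat ∘ hmap) z = (fderiv ℝ fHat (hmap z)).comp (fderiv ℝ hmap z) :=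
      fderiv_comp z (hfhdiff _) (hhdiff z)
    rw [← h2]
    exact congrArg (fun F => fderiv ℝ F z) (funext fun w => (hleft (f w)).symm)
  set A := fderiv ℝ fHat zh with hA
  set T := fderiv ℝ hmap z with hT
  -- surjectivity of T
  have hTsurj : Function.Surjective T := by
    set h' : LatSp K M → LatSp K M := fun w => fInv (fHat w) with hh'
    have h'diff : Differentiable ℝ h' := hfInvDiff.comp hfhdiff
    have hco : hmap ∘ h' = id := by
      funext w
      simp only [comp_apply, hhm, hh', id_eq]
      rw [hfInvR (fHat w)]
      exact hright w
    have h'z : h' zh = z := by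
      simp only [hh', hzh, hhm]
      rw [hleft (f z)]
      exact hfInvL z
    have hcomp : T.comp (fderiv ℝ h' zh) = ContinuousLinearMap.id ℝ (LatSp K M) := by
      have hc := fderiv_comp (𝕜 := ℝ) zh (hhdiff (h' zh)) (h'diff zh)
      rw [h'z] at hc
      rw [hT, ← hc, hco, fderiv_id]
    intro y
    refine ⟨fderiv ℝ h' zh y, ?_⟩
    have := DFunLike.congr_fun hcomp y
    simpa using this
  -- injectivity of fderiv f z
  have hDinj : Function.Injective (fderiv ℝ f z) := by
    have hcomp : (fderiv ℝ fInv (f z)).comp (fderiv ℝ f z) = ContinuousLinearMap.id ℝ (LatSp K M) := by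
      rw [← fderiv_comp z (hfInvDiff (f z)) (hfdiff z), hfInvL.comp_eq_id, fderiv_id]
    intro a b hab
    have ha := DFunLike.congr_fun hcomp a
    have hb := DFunLike.congr_fun hcomp b
    simp only [ContinuousLinearMap.comp_apply, ContinuousLinearMap.id_apply] at ha hb
    rw [← ha, ← hb, hab]
  -- existence of a pixel in I_i(z)
  have hIne : ∃ n, ∃ v, slotDeriv f z n i v ≠ 0 := by
    by_contra hemp
    push_neg at hemp
    have hv0 : (Pi.single i (Pi.single (⟨0, hM⟩ : Fin M) (1:ℝ)) : LatSp K M) ≠ 0 := by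
      intro h
      have := congrFun (congrFun h i) ⟨0, hM⟩
      simp at this
    have : fderiv ℝ f z (Pi.single i (Pi.single (⟨0, hM⟩ : Fin M) (1:ℝ))) = 0 := by
      funext n
      exact hemp n _
    exact hv0 (hDinj (by simpa using this))
  obtain ⟨n, v, hv⟩ := hIne
  have hnI : n ∈ Iset f z i := fun h => hv (congrFun h v)
  -- existence of j
  have hexj : ∃ j, n ∈ Iset fHat zh j := by
    by_contra hj
    push_neg at hj
    have hz : ∀ j, slotDeriv fHat zh n j = 0 := by
      intro j
      by_contra h
      exact hj j h
    apply hv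
    show fderiv ℝ f z (Pi.single i v) n = 0
    rw [hchain]
    have : ((A.comp T) (Pi.single i v)) n = A (T (Pi.single i v)) n := rfl
    rw [this, apply_eq_sum_slotDeriv]
    exact Finset.sum_eq_zero fun j _ => by rw [hz j]; rfl
  obtain ⟨j0, hj0⟩ := hexj
  -- uniqueness
  have huniq : ∀ j1 j2 : Fin K, (Iset fHat zh j1 ∩ Iset f z i).Nonempty →
      (Iset fHat zh j2 ∩ Iset f z i).Nonempty → j1 = j2 := by
    intro j1 j2 h1ne h2ne
    by_contra hne
    obtain ⟨n1, hn1⟩ := h1ne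
    obtain ⟨n2, hn2⟩ := h2ne
    set S1 : Set (Fin N) := Iset fHat zh j1 ∩ Iset f z i with hS1
    set S2 : Set (Fin N) := Iset f z i \ Iset fHat zh j1 with hS2
    have hS1ne : S1.Nonempty := ⟨n1, hn1⟩
    have hS2ne : S2.Nonempty := by
      refine ⟨n2, hn2.2, fun hmem => ?_⟩
      exact Set.eq_empty_iff_forall_notMem.mp (hfhc zh j1 j2 hne) n2 ⟨hmem, hn2.1⟩
    have hUnion : S1 ∪ S2 = Iset f z i := by
      apply Set.Subset.antisymm
      · rintro m (hm | hm)
        exacts [hm.2, hm.1]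
      · intro m hm
        by_cases hmem : m ∈ Iset fHat zh j1
        · exact Or.inl ⟨hmem, hm⟩
        · exact Or.inr ⟨hm, hmem⟩
    have hDisj : S1 ∩ S2 = ∅ := by
      ext m
      simp only [Set.mem_inter_iff, Set.mem_empty_iff_false, iff_false, hS1, hS2,
        Set.mem_diff, not_and]
      tauto
    have hdep := hfi z i S1 S2 hS1ne hS2ne hUnion hDisj
    -- build P, Q
    let P : LatSp K M →ₗ[ℝ] LatSp K M :=
      (LinearMap.single ℝ (fun _ : Fin K => SlotSp M) j1).comp (LinearMap.proj j1)
    let Q : LatSp K M →ₗ[ℝ] LatSp K M := LinearMap.id - P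
    have hPQ : ∀ w, P w + Q w = w := by
      intro w; simp [Q]
    have hPapp : ∀ (w : LatSp K M) (j : Fin K), P w j = (Pi.single j1 (w j1) : LatSp K M) j := by
      intro w j; rfl
    set AL := A.toLinearMap with hAL
    have hALapp : ∀ (w : LatSp K M) (m : Fin N), AL w m = ∑ j : Fin K, slotDeriv fHat zh m j (w j) :=
      fun w m => apply_eq_sum_slotDeriv fHat zh w m
    have h1 : ∀ w, ∀ m ∈ S1, AL (Q w) m = 0 := by
      intro w m hm
      rw [hALapp]
      apply Finset.sum_eq_zero
      intro j _
      by_cases hj : j = j1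
      · subst hj
        have : (Q w) j = 0 := by
          simp [Q, hPapp]
        rw [this, slotDeriv_zero_apply]
      · have hzero : slotDeriv fHat zh m j = 0 := by
          by_contra h
          exact Set.eq_empty_iff_forall_notMem.mp (hfhc zh j1 j (Ne.symm hj)) m ⟨hm.1, h⟩
        rw [hzero]; rfl
    have h2 : ∀ w, ∀ m ∈ S2, AL (P w) m = 0 := by
      intro w m hm
      rw [hALapp]
      apply Finset.sum_eq_zero
      intro j _
      by_cases hj : j = j1
      · subst hj
        have hzero : slotDeriv fHat zh m j = 0 := not_not.mp hm.2
        rw [hzero]; rfl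
      · have : (P w) j = 0 := by
          rw [hPapp, Pi.single_eq_of_ne hj]
        rw [this, slotDeriv_zero_apply]
    have hsplit := rank_split AL P Q hPQ S1 S2 h1 h2
    -- jacRank via AL
    have hjac : ∀ S : Set (Fin N), jacRank f z S =
        Module.finrank ℝ (LinearMap.range ((LinearMap.funLeft ℝ ℝ ((↑) : S → Fin N)).comp AL)) := by
      intro S
      have hrange : LinearMap.range ((LinearMap.funLeft ℝ ℝ ((↑) : S → Fin N)).comp
          (fderiv ℝ f z).toLinearMap)
          = LinearMap.range ((LinearMap.funLeft ℝ ℝ ((↑) : S → Fin N)).comp AL) := by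
        rw [hchain]
        have hcoe : ((A.comp T).toLinearMap) = AL.comp T.toLinearMap := rfl
        rw [hcoe, ← LinearMap.comp_assoc]
        exact LinearMap.range_comp_of_range_eq_top _
          (LinearMap.range_eq_top.mpr hTsurj)
      unfold jacRank
      rw [hrange]
    rw [DepSub, hjac, hjac, hjac] at hdep
    omega
  exact ⟨j0, ⟨n, hj0, hnI⟩, fun j' hj' => huniq j' j0 hj' ⟨n, hj0, hnI⟩⟩
end

section
/- Let f : Z → X be a diffeomorphism that is compositional and irreducible, let ĝ : X → Z be a diffeomorphism whose inverse f̂ = ĝ^{-1} is compositional, and set ẑ := ĝ(f(z)). Then for every z ∈ Z and every i ∈ [K] there exists at most one j ∈ [K] such that ∂ẑ_j/∂z_i(z) ≠ 0. -/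
open Function Set

/-- Auxiliary: the rank of a product of submodules is the sum of the ranks. -/
lemma finrank_submodule_prod {R M M₂ : Type*} [Field R] [AddCommGroup M] [AddCommGroup M₂]
    [Module R M] [Module R M₂] (p : Submodule R M) (q : Submodule R M₂)
    [FiniteDimensional R p] [FiniteDimensional R q] :
    Module.finrank R (p.prod q) = Module.finrank R p + Module.finrank R q := by
  let e : ↥(p.prod q) ≃ₗ[R] p × q :=
  { toFun := fun x => (⟨x.1.1, x.2.1⟩, ⟨x.1.2, x.2.2⟩)
    invFun := fun y => ⟨(y.1.1, y.2.1), ⟨y.1.2, y.2.2⟩⟩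
    map_add' := fun _ _ => rfl
    map_smul' := fun _ _ => rfl
    left_inv := fun _ => rfl
    right_inv := fun _ => rfl }
  rw [e.finrank_eq, Module.finrank_prod]

/-- **Proposition 3.** Every ground-truth slot affects at most one inferred slot:
for every `z` and `i` there is at most one `j` with `∂ẑ_j/∂z_i(z) ≠ 0`. -/
theorem at_most_one_object {K M N : ℕ} (hK : 1 ≤ K) (hM : 1 ≤ M) (hN : 1 ≤ N)
    (f : LatSp K M → ObsSp N) (hf : IsDiffeo f)
    (hfc : Compositional f) (hfi : IrreducibleMech f)
    (gHat : ObsSp N → LatSp K M) (fHat : LatSp K M → ObsSp N)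
    (hgdiff : Differentiable ℝ gHat) (hfhdiff : Differentiable ℝ fHat)
    (hleft : Function.LeftInverse fHat gHat) (hright : Function.RightInverse fHat gHat)
    (hfhc : Compositional fHat) :
    ∀ (z : LatSp K M) (i : Fin K) (j1 j2 : Fin K),
      slotBlock (gHat ∘ f) z j1 i ≠ 0 → slotBlock (gHat ∘ f) z j2 i ≠ 0 → j1 = j2 := by
  intro z i j1 j2 hb1 hb2
  by_contra hj
  obtain ⟨hfdiff, finv, hfinvdiff, hlinv, hrinv⟩ := hf
  set zh : LatSp K M := (gHat ∘ f) z with hzh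
  have hhd : Differentiable ℝ (gHat ∘ f) := hgdiff.comp hfdiff
  set Dh : LatSp K M →L[ℝ] LatSp K M := fderiv ℝ (gHat ∘ f) z with hDh
  set DF : LatSp K M →L[ℝ] ObsSp N := fderiv ℝ f z with hDF
  set DfH : LatSp K M →L[ℝ] ObsSp N := fderiv ℝ fHat zh with hDfH
  -- chain rule : DF = DfH ∘ Dh
  have hchain : DF = DfH.comp Dh := by
    have h1 : f = fHat ∘ (gHat ∘ f) := funext fun w => (hleft (f w)).symm
    rw [hDF]
    conv_lhs => rw [h1]
    exact fderiv_comp z (hfhdiff _) (hhd z)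
  have hchain' : ∀ u, DF u = DfH (Dh u) := fun u => by rw [hchain]; rfl
  -- DfH is injective
  have hinj : Function.Injective DfH := by
    have hid : (fderiv ℝ gHat (fHat zh)).comp DfH = ContinuousLinearMap.id ℝ (LatSp K M) := by
      rw [hDfH, ← fderiv_comp zh (hgdiff _) (hfhdiff _)]
      have h2 : gHat ∘ fHat = id := funext fun w => hright w
      rw [h2, fderiv_id]
    intro a b hab
    have h3 := DFunLike.congr_fun hid a
    have h4 := DFunLike.congr_fun hid b
    simp only [ContinuousLinearMap.comp_apply, ContinuousLinearMap.coe_id', id_eq] at h3 h4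
    rw [← h3, ← h4, hab]
  -- Dh is surjective
  have hsurj : Function.Surjective Dh := by
    have hed : Differentiable ℝ (finv ∘ fHat) := hfinvdiff.comp hfhdiff
    have hcompid : (gHat ∘ f) ∘ (finv ∘ fHat) = id := by
      funext w
      show gHat (f (finv (fHat w))) = w
      rw [hrinv (fHat w)]
      exact hright w
    have hez : (finv ∘ fHat) zh = z := by
      show finv (fHat ((gHat ∘ f) z)) = z
      rw [show fHat ((gHat ∘ f) z) = f z from hleft (f z)]
      exact hlinv z
    have hid : Dh.comp (fderiv ℝ (finv ∘ fHat) zh) = ContinuousLinearMap.id ℝ (LatSp K M) := by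
      have h5 := fderiv_comp zh (hhd ((finv ∘ fHat) zh)) (hed zh)
      rw [hcompid, fderiv_id, hez] at h5
      exact h5.symm
    intro u
    refine ⟨fderiv ℝ (finv ∘ fHat) zh u, ?_⟩
    have h6 := DFunLike.congr_fun hid u
    simpa using h6
  -- expansion of DfH along slots
  have hsum : ∀ (u : LatSp K M) (n : Fin N),
      DfH u n = ∑ j : Fin K, slotDeriv fHat zh n j (u j) := by
    intro u n
    calc DfH u n = DfH (∑ j : Fin K, Pi.single j (u j)) n := by rw [Finset.univ_sum_single]
    _ = (∑ j : Fin K, DfH (Pi.single j (u j))) n := by rw [map_sum]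
    _ = ∑ j : Fin K, DfH (Pi.single j (u j)) n := Finset.sum_apply _ _ _
    _ = ∑ j : Fin K, slotDeriv fHat zh n j (u j) := rfl
  -- compositionality of fHat : other slots do not matter
  have hzero : ∀ (n : Fin N) (jl j : Fin K), n ∈ Iset fHat zh jl → j ≠ jl →
      slotDeriv fHat zh n j = 0 := by
    intro n jl j hn hne
    by_contra hnz
    have hmem : n ∈ Iset fHat zh j ∩ Iset fHat zh jl := ⟨hnz, hn⟩
    rw [hfhc zh j jl hne] at hmem
    exact hmem
  have hone : ∀ (n : Fin N) (jl : Fin K), n ∈ Iset fHat zh jl →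
      ∀ u : LatSp K M, DfH u n = slotDeriv fHat zh n jl (u jl) := by
    intro n jl hn u
    rw [hsum u n]
    refine Finset.sum_eq_single jl ?_ ?_
    · intro j _ hne
      rw [hzero n jl j hn hne]
      rfl
    · intro h
      exact absurd (Finset.mem_univ jl) h
  -- key : a nonzero slot block yields a pixel in both Isets
  have hkey : ∀ jl : Fin K, slotBlock (gHat ∘ f) z jl i ≠ 0 →
      ∃ n, n ∈ Iset f z i ∩ Iset fHat zh jl := by
    intro jl hbl
    obtain ⟨v, hv⟩ : ∃ v, slotBlock (gHat ∘ f) z jl i v ≠ 0 := by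
      by_contra hall
      push_neg at hall
      exact hbl (funext fun v => hall v)
    have hw : Dh (Pi.single i v) jl ≠ 0 := hv
    have hw' : Pi.single jl (Dh (Pi.single i v) jl) ≠ (0 : LatSp K M) := by
      intro h0
      apply hw
      have h1 := congrFun h0 jl
      rwa [Pi.single_eq_same] at h1
    have hD : DfH (Pi.single jl (Dh (Pi.single i v) jl)) ≠ 0 := by
      intro h0
      exact hw' (hinj (h0.trans (map_zero DfH).symm))
    obtain ⟨n, hn⟩ : ∃ n, DfH (Pi.single jl (Dh (Pi.single i v) jl)) n ≠ 0 := by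
      by_contra hall
      push_neg at hall
      exact hD (funext hall)
    have hnI : n ∈ Iset fHat zh jl := by
      show slotDeriv fHat zh n jl ≠ 0
      intro h0
      exact hn (congrFun h0 (Dh (Pi.single i v) jl))
    refine ⟨n, ?_, hnI⟩
    show slotDeriv f z n i ≠ 0
    intro h0
    apply hn
    have h2 : slotDeriv f z n i v = DfH (Pi.single jl (Dh (Pi.single i v) jl)) n := by
      show DF (Pi.single i v) n = _
      rw [hchain' (Pi.single i v), hone n jl hnI (Dh (Pi.single i v))]
      rfl
    rw [← h2, h0]
    rfl
  obtain ⟨n1, hn1⟩ := hkey j1 hb1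
  obtain ⟨n2, hn2⟩ := hkey j2 hb2
  set S1 : Set (Fin N) := Iset f z i ∩ Iset fHat zh j1 with hS1def
  set S2 : Set (Fin N) := Iset f z i \ S1 with hS2def
  have hS1sub : S1 ⊆ Iset f z i := Set.inter_subset_left
  have hS1ne : S1.Nonempty := ⟨n1, hn1⟩
  have hS2ne : S2.Nonempty := by
    refine ⟨n2, hn2.1, ?_⟩
    intro hmem
    have hmm : n2 ∈ Iset fHat zh j1 ∩ Iset fHat zh j2 := ⟨hmem.2, hn2.2⟩
    rw [hfhc zh j1 j2 hj] at hmm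
    exact hmm
  have hunion : S1 ∪ S2 = Iset f z i := Set.union_diff_cancel hS1sub
  have hdisj : S1 ∩ S2 = ∅ :=
    Set.eq_empty_iff_forall_notMem.mpr (fun n hn => hn.2.2 hn.1)
  have hdep := hfi z i S1 S2 hS1ne hS2ne hunion hdisj
  -- the linear maps given by rows S1, S2, S1 ∪ S2 of the Jacobian
  set L : LatSp K M →ₗ[ℝ] (↑(S1 ∪ S2) → ℝ) :=
    (LinearMap.funLeft ℝ ℝ ((↑) : ↑(S1 ∪ S2) → Fin N)).comp (fderiv ℝ f z).toLinearMap with hLdef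
  set L1 : LatSp K M →ₗ[ℝ] (↑S1 → ℝ) :=
    (LinearMap.funLeft ℝ ℝ ((↑) : ↑S1 → Fin N)).comp (fderiv ℝ f z).toLinearMap with hL1def
  set L2 : LatSp K M →ₗ[ℝ] (↑S2 → ℝ) :=
    (LinearMap.funLeft ℝ ℝ ((↑) : ↑S2 → Fin N)).comp (fderiv ℝ f z).toLinearMap with hL2def
  set ι : (↑(S1 ∪ S2) → ℝ) →ₗ[ℝ] (↑S1 → ℝ) × (↑S2 → ℝ) :=
    (LinearMap.funLeft ℝ ℝ (Set.inclusion Set.subset_union_left)).prod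
      (LinearMap.funLeft ℝ ℝ (Set.inclusion Set.subset_union_right)) with hιdef
  have hι : Function.Injective ι := by
    intro g g' hgg
    funext s
    obtain ⟨n, hn⟩ := s
    obtain h1 | h2 := hn
    · exact congrFun (congrArg Prod.fst hgg) ⟨n, h1⟩
    · exact congrFun (congrArg Prod.snd hgg) ⟨n, h2⟩
  have hcompι : ι.comp L = L1.prod L2 := rfl
  -- structural facts about the rows
  have hA : ∀ n : Fin N, n ∈ S1 → ∀ u : LatSp K M,
      DF u n = DfH (Pi.single j1 (Dh u j1)) n := by
    intro n hn u
    rw [hchain' u, hone n j1 hn.2 (Dh u)]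
    rfl
  have hB : ∀ n : Fin N, n ∈ S2 → ∀ x : SlotSp M, DfH (Pi.single j1 x) n = 0 := by
    intro n hn x
    have hnot : n ∉ Iset fHat zh j1 := fun hmem => hn.2 ⟨hn.1, hmem⟩
    have h0 : slotDeriv fHat zh n j1 = 0 := not_not.mp hnot
    exact congrFun h0 x
  -- range of the paired map is the full product
  have hrange : LinearMap.range (L1.prod L2)
      = (LinearMap.range L1).prod (LinearMap.range L2) := by
    apply le_antisymm
    · rintro x ⟨u, rfl⟩
      exact ⟨⟨u, rfl⟩, ⟨u, rfl⟩⟩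
    · rintro ⟨a, b⟩ hab
      rw [Submodule.mem_prod] at hab
      obtain ⟨⟨u, hu⟩, ⟨u', hu'⟩⟩ := hab
      obtain ⟨w, hw⟩ := hsurj (Pi.single j1 (Dh u j1) + (Dh u' - Pi.single j1 (Dh u' j1)))
      have hw1 : Dh w j1 = Dh u j1 := by
        rw [hw]
        simp
      have hfst : L1 w = a := by
        funext s
        calc L1 w s = DF w (s : Fin N) := rfl
        _ = DfH (Pi.single j1 (Dh w j1)) (s : Fin N) := hA s s.2 w
        _ = DfH (Pi.single j1 (Dh u j1)) (s : Fin N) := by rw [hw1]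
        _ = DF u (s : Fin N) := (hA s s.2 u).symm
        _ = a s := congrFun hu s
      have hsnd : L2 w = b := by
        funext s
        have hs2 : (s : Fin N) ∈ S2 := s.2
        calc L2 w s = DfH (Dh w) (s : Fin N) := by
              rw [show L2 w s = DF w (s : Fin N) from rfl, hchain']
        _ = DfH (Pi.single j1 (Dh u j1)) (s : Fin N)
              + (DfH (Dh u') (s : Fin N) - DfH (Pi.single j1 (Dh u' j1)) (s : Fin N)) := by
              rw [hw, map_add, map_sub]
              rfl
        _ = DF u' (s : Fin N) := by
              rw [hB _ hs2, hB _ hs2, hchain' u']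
              ring
        _ = b s := congrFun hu' s
      exact ⟨w, by simp only [LinearMap.prod_apply, Function.prod, hfst, hsnd]⟩
  -- rank computation
  haveI : FiniteDimensional ℝ (LatSp K M) := inferInstance
  haveI hfd1 : FiniteDimensional ℝ ↥(LinearMap.range L1) := L1.finiteDimensional_range
  haveI hfd2 : FiniteDimensional ℝ ↥(LinearMap.range L2) := L2.finiteDimensional_range
  have heq : jacRank f z (S1 ∪ S2) = jacRank f z S1 + jacRank f z S2 := by
    have h1 : LinearMap.range (ι.comp L) = Submodule.map ι (LinearMap.range L) :=
      LinearMap.range_comp _ _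
    calc jacRank f z (S1 ∪ S2) = Module.finrank ℝ (LinearMap.range L) := rfl
    _ = Module.finrank ℝ (Submodule.map ι (LinearMap.range L)) :=
        LinearEquiv.finrank_eq (Submodule.equivMapOfInjective ι hι _)
    _ = Module.finrank ℝ (LinearMap.range (L1.prod L2)) := by rw [← h1, hcompι]
    _ = Module.finrank ℝ ((LinearMap.range L1).prod (LinearMap.range L2)) := by rw [hrange]
    _ = Module.finrank ℝ (LinearMap.range L1) + Module.finrank ℝ (LinearMap.range L2) :=
        finrank_submodule_prod _ _
    _ = jacRank f z S1 + jacRank f z S2 := rfl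
  unfold DepSub at hdep
  rw [heq] at hdep
  exact lt_irrefl _ hdep
end

section
/- Let h : Z → Z be a continuously differentiable diffeomorphism and suppose that for every z ∈ Z there exists a permutation σ_z of [K] such that for all j, i ∈ [K] with i ≠ σ_z(j), the Jacobian block ∂h_j/∂z_i(z) is zero, while ∂h_j/∂z_{σ_z(j)}(z) ≠ 0 for every j. Then the permutation is globally constant: there exists a single permutation σ of [K] such that for all z ∈ Z, all j ∈ [K], and all i ≠ σ(j), ∂h_j/∂z_i(z) = 0. -/
open Function Set

/-- **Global permutation.** If a continuously differentiable diffeomorphism of the latent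
space has, at each point, a slot-permutation-block-diagonal Jacobian (with nonvanishing
diagonal blocks), then the permutation can be chosen globally constant. -/
theorem global_permutation {K M : ℕ} (hK : 1 ≤ K) (hM : 1 ≤ M)
    (h : LatSp K M → LatSp K M) (hd : IsDiffeo h) (hc : ContDiff ℝ 1 h)
    (hperm : ∀ z : LatSp K M, ∃ σ : Equiv.Perm (Fin K),
      (∀ j i : Fin K, i ≠ σ j → slotBlock h z j i = 0) ∧
      (∀ j : Fin K, slotBlock h z j (σ j) ≠ 0)) :
    ∃ σ : Equiv.Perm (Fin K),
      ∀ (z : LatSp K M) (j i : Fin K), i ≠ σ j → slotBlock h z j i = 0 := by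
  classical
  have hcont : Continuous (fderiv ℝ h) := hc.continuous_fderiv one_ne_zero
  set F : LatSp K M → Equiv.Perm (Fin K) := fun z => (hperm z).choose with hFdef
  have hF0 : ∀ z, (∀ j i : Fin K, i ≠ F z j → slotBlock h z j i = 0) ∧
      (∀ j : Fin K, slotBlock h z j (F z j) ≠ 0) := fun z => (hperm z).choose_spec
  have key : IsLocallyConstant F := by
    rw [IsLocallyConstant.iff_exists_open]
    intro z₀
    have hex : ∀ j : Fin K, ∃ v : SlotSp M, ∃ m : Fin M,
        (fderiv ℝ h z₀ (Pi.single (F z₀ j) v)) j m ≠ 0 := by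
      intro j
      have hne := (hF0 z₀).2 j
      by_contra hcon
      push_neg at hcon
      apply hne
      funext v m
      exact hcon v m
    choose v m hvm using hex
    refine ⟨⋂ j : Fin K, {z | (fderiv ℝ h z (Pi.single (F z₀ j) (v j))) j (m j) ≠ 0},
      ?_, ?_, ?_⟩
    · refine isOpen_iInter_of_finite fun j => ?_
      have hco : Continuous fun z => (fderiv ℝ h z (Pi.single (F z₀ j) (v j))) j (m j) :=
        (continuous_apply (m j)).comp ((continuous_apply j).comp
          (hcont.clm_apply continuous_const))
      exact isOpen_ne.preimage hco
    · exact Set.mem_iInter.2 fun j => hvm j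
    · intro z hz
      have hz' := Set.mem_iInter.1 hz
      refine Equiv.ext fun j => ?_
      by_contra hne
      have hblock : slotBlock h z j (F z₀ j) = 0 :=
        (hF0 z).1 j (F z₀ j) (fun hh => hne hh.symm)
      have : (fderiv ℝ h z (Pi.single (F z₀ j) (v j))) j (m j) = 0 := by
        have := congrFun (congrFun hblock (v j)) (m j)
        simpa [slotBlock] using this
      exact hz' j this
  have hconst : ∀ z : LatSp K M, F z = F (fun _ _ => 0) := fun z =>
    key.apply_eq_of_preconnectedSpace z (fun _ _ => 0)
  refine ⟨F (fun _ _ => 0), fun z j i hij => ?_⟩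
  exact (hF0 z).1 j i (by rw [hconst z]; exact hij)
end

section
/- Let h : Z → Z be a diffeomorphism and σ a permutation of [K] such that for all z ∈ Z, all j ∈ [K], and all i ≠ σ(j), the Jacobian block ∂h_j/∂z_i(z) is zero. Then for every j ∈ [K] there exists a diffeomorphism h̃_j : ℝ^M → ℝ^M such that h_j(z) = h̃_j(z_{σ(j)}) for all z ∈ Z; that is, each output slot of h depends only on one input slot and this dependence is a diffeomorphism of ℝ^M. -/
open Function Set

/-- **Slot-wise diffeomorphisms.** If a diffeomorphism of the latent space has a globally
permutation-block-diagonal Jacobian, then each output slot is a diffeomorphic function of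
a single input slot. -/
theorem slotwise_diffeo {K M : ℕ} (hK : 1 ≤ K) (hM : 1 ≤ M)
    (h : LatSp K M → LatSp K M) (hd : IsDiffeo h) (σ : Equiv.Perm (Fin K))
    (hblock : ∀ (z : LatSp K M) (j i : Fin K), i ≠ σ j → slotBlock h z j i = 0) :
    ∀ j : Fin K, ∃ ht : SlotSp M → SlotSp M, IsDiffeo ht ∧
      ∀ z : LatSp K M, h z j = ht (z (σ j)) := by
  obtain ⟨hdiff, g, hgdiff, hgl, hgr⟩ := hd
  -- key: h z j depends only on z (σ j)
  have key : ∀ (j : Fin K) (z z' : Fin K → Fin M → ℝ), z (σ j) = z' (σ j) → h z j = h z' j := by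
    intro j z z' hzz'
    set p := σ j with hp
    set d := z' - z with hdd
    have hd0 : d p = 0 := by simp [hdd, sub_eq_zero, hzz'.symm]
    set γ : ℝ → (Fin M → ℝ) := fun t => h (z + t • d) j with hγ
    have hc : ∀ t : ℝ, HasDerivAt (fun t : ℝ => z + t • d) d t := by
      intro t
      simpa using ((hasDerivAt_id t).smul_const d).const_add z
    have hder : ∀ t : ℝ, HasDerivAt γ 0 t := by
      intro t
      have h1 : HasDerivAt (fun t : ℝ => h (z + t • d)) (fderiv ℝ h (z + t • d) d) t :=
        (hdiff _).hasFDerivAt.comp_hasDerivAt t (hc t)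
      have h2 : HasDerivAt γ (fderiv ℝ h (z + t • d) d j) t := by
        have := (ContinuousLinearMap.proj (R := ℝ) (φ := fun _ : Fin K => Fin M → ℝ) j
          ).hasFDerivAt.comp_hasDerivAt t h1
        exact this
      have hz0 : fderiv ℝ h (z + t • d) d j = 0 := by
        set w := z + t • d with hw
        have hdsum : d = ∑ i, Pi.single i (d i) := (Finset.univ_sum_single d).symm
        rw [show (fderiv ℝ h w) d = ∑ i, fderiv ℝ h w (Pi.single i (d i)) by
          rw [← map_sum]; rw [← hdsum]]
        rw [Finset.sum_apply]
        apply Finset.sum_eq_zero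
        intro i _
        by_cases hip : i = p
        · subst hip; rw [hd0]; simp
        · simpa [slotBlock] using congrFun (hblock w j i (by rwa [← hp])) (d i)
      rwa [hz0] at h2
    have hconst : γ 0 = γ 1 :=
      is_const_of_deriv_eq_zero (fun t => (hder t).differentiableAt)
        (fun t => (hder t).deriv) 0 1
    simpa [hγ, hdd] using hconst
  intro j
  set p := σ j with hp
  classical
  set ht : (Fin M → ℝ) → (Fin M → ℝ) := fun v => h (Pi.single p v) j with hht
  set gt : (Fin M → ℝ) → (Fin M → ℝ) :=
    fun u => g (h 0 + Pi.single j (u - h 0 j)) p with hgt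
  refine ⟨ht, ⟨?_, gt, ?_, ?_, ?_⟩, ?_⟩
  · -- ht differentiable
    exact (differentiable_apply j).comp (hdiff.comp
      ((LinearMap.single ℝ (fun _ : Fin K => (Fin M → ℝ)) p).toContinuousLinearMap).differentiable)
  · -- gt differentiable
    refine (differentiable_apply (𝕜 := ℝ) (F' := fun _ : Fin K => Fin M → ℝ) p).comp (hgdiff.comp ?_)
    refine (differentiable_const _).add ?_
    exact ((LinearMap.single ℝ (fun _ : Fin K => (Fin M → ℝ)) j).toContinuousLinearMap
      ).differentiable.comp ((differentiable_id).sub_const _)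
  · -- left inverse
    intro v
    have hx : h 0 + Pi.single j (h (Pi.single p v) j - h 0 j) = h (Pi.single p v) := by
      funext j'
      by_cases hj' : j' = j
      · subst hj'; simp
      · have : h (Pi.single p v) j' = h 0 j' := by
          apply key
          rw [Pi.single_eq_of_ne]
          · simp
          · intro hcon
            exact hj' (σ.injective (by rw [hcon, hp]))
        simp [Pi.single_eq_of_ne hj', this]
    simp only [hgt, hht, hx, hgl (Pi.single p v)]
    simp
  · -- right inverse
    intro u
    set x : Fin K → Fin M → ℝ := h 0 + Pi.single j (u - h 0 j) with hxdef
    have hzx : h (g x) = x := hgr x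
    have : ht (g x p) = h (g x) j := by
      apply key
      simp [hp]
    simp only [hgt, hht] at this ⊢
    rw [this, hzx, hxdef]
    simp
  · -- the equation
    intro z
    apply key
    simp [hp]
end
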